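/- Let F^O ⊆ 𝓛 be a finite set of pairs with |F^O| ≤ k, let 𝓓' := 𝓓 \ ∪_{(i,r)∈F^O} B(i,r) and k' := k − |F^O|. Let F ⊆ 𝓛 be a finite set of pairs such that |F| ≤ k' and |𝓓' \ ∪_{(i,r)∈F} B(i,r)| ≤ m. Suppose that for each i ∈ μ(F) a radius r'_i with r'_i ≤ max{r : (i,r) ∈ F} is given so that the set of pairs U := {(i, r'_i) : i ∈ μ(F)} is contained in 𝓛 and the pairs of U are pairwise non-intersecting. Then there exists a feasible LBkSRO-solution (S,σ) with cost(S,σ) ≤ cost(F) + Σ_{(i,r)∈F^O} 2r. -/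

import Mathlib

open scoped Classical

/-!
Open `U = {(i, r'_i)}` together with a maximal subfamily of `F^O` whose client balls are disjoint
from each other and from those of `U`. Every client in such an anchor ball goes to its centre,
so each opened facility meets its lower bound. By maximality, every nonempty ball of `F^O` meets
an anchor ball, and its clients are sent to that anchor's centre at distance at most
`anchor radius + 2 r`; the remaining clients go to the centres of `F` or are outliers. Charging
`r'_i` to `F`, an anchor `(i, r)` of `F^O` to its own `2 r`, and every other ball of `F^O` to the
anchor it meets, no pair is charged twice.
-/

open Finset

section Anchors

variable {ι α : Type*} [Lattice α] [OrderBot α] {f : ι → α}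

theorem Finset.exists_maximal_pairwiseDisjoint_extension [DecidableEq ι] {A : Finset ι}
    (hA : (A : Set ι).PairwiseDisjoint f) (P : Finset ι) :
    ∃ S, A ⊆ S ∧ S ⊆ A ∪ P ∧ (S : Set ι).PairwiseDisjoint f ∧
      ∀ p ∈ P, f p ≠ ⊥ → ∃ a ∈ S, ¬Disjoint (f a) (f p) := by
  set 𝒮 := (A ∪ P).powerset.filter fun S : Finset ι => (S : Set ι).PairwiseDisjoint f
  obtain ⟨S, hAS, hSmax⟩ :=
    𝒮.exists_le_maximal (mem_filter.2 ⟨mem_powerset.2 subset_union_left, hA⟩)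
  obtain ⟨hSAP, hS⟩ := mem_filter.1 hSmax.1
  rw [mem_powerset] at hSAP
  refine ⟨S, hAS, hSAP, hS, fun p hp hfp => ?_⟩
  by_contra! hdisj
  have hpS : insert p S ∈ 𝒮 := by
    refine mem_filter.2 ⟨mem_powerset.2 (insert_subset (mem_union_right _ hp) hSAP), ?_⟩
    rw [coe_insert]
    exact hS.insert fun a ha _ => (hdisj a ha).symm
  exact hfp (disjoint_self.1 (hdisj p (hSmax.2 hpS (subset_insert p S) (mem_insert_self p S))))

theorem Finset.exists_retraction_of_forall_not_disjoint {S P : Finset ι}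
    (h : ∀ p ∈ P, f p ≠ ⊥ → ∃ a ∈ S, ¬Disjoint (f a) (f p)) :
    ∃ g : ι → ι, (∀ a ∈ S, g a = a) ∧
      ∀ p ∈ P, f p ≠ ⊥ → g p ∈ S ∧ ¬Disjoint (f (g p)) (f p) := by
  have (p : ι) : ∃ a, (p ∈ S → a = p) ∧ (p ∈ P → f p ≠ ⊥ → a ∈ S ∧ ¬Disjoint (f a) (f p)) := by
    by_cases hpS : p ∈ S
    · exact ⟨p, fun _ => rfl, fun _ hfp => ⟨hpS, by rwa [disjoint_self]⟩⟩
    by_cases hp : p ∈ P ∧ f p ≠ ⊥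
    · obtain ⟨a, ha, hap⟩ := h p hp.1 hp.2
      exact ⟨a, fun h => absurd h hpS, fun _ _ => ⟨ha, hap⟩⟩
    · exact ⟨p, fun h => absurd h hpS, fun h₁ h₂ => absurd ⟨h₁, h₂⟩ hp⟩
  choose g hg using this
  exact ⟨g, fun a ha => (hg a).1 ha, fun p hp hfp => (hg p).2 hp hfp⟩

end Anchors

section ClientBalls

variable {X : Type*} [MetricSpace X] (𝓓 : Finset X)

noncomputable def clientBall (p : X × ℝ) : Finset X := 𝓓.filter fun j => dist p.1 j ≤ p.2

variable {𝓓}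

theorem mem_clientBall {p : X × ℝ} {j : X} : j ∈ clientBall 𝓓 p ↔ j ∈ 𝓓 ∧ dist p.1 j ≤ p.2 :=
  mem_filter

theorem disjoint_clientBall {p q : X × ℝ} (h : p.2 + q.2 < dist p.1 q.1) :
    Disjoint (clientBall 𝓓 p) (clientBall 𝓓 q) := by
  refine disjoint_left.2 fun j hjp hjq => ?_
  have := dist_triangle_right p.1 q.1 j
  linarith [(mem_clientBall.1 hjp).2, (mem_clientBall.1 hjq).2]

theorem pairwiseDisjoint_clientBall_image {C : Finset X} {r : X → ℝ}
    (h : ∀ i ∈ C, ∀ i' ∈ C, i ≠ i' → r i + r i' < dist i i') :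
    ((C.image fun i => (i, r i) : Finset (X × ℝ)) : Set (X × ℝ)).PairwiseDisjoint
      (clientBall 𝓓) := by
  rintro _ hp _ hp' hne
  obtain ⟨i, hi, rfl⟩ := mem_image.1 hp
  obtain ⟨i', hi', rfl⟩ := mem_image.1 hp'
  exact disjoint_clientBall (h i hi i' hi' fun h => hne (h ▸ rfl))

end ClientBalls

section Assignment

variable {X : Type*} [MetricSpace X] (𝓓 : Finset X) (A P F : Finset (X × ℝ))
  (g : X × ℝ → X × ℝ)

noncomputable def assignment (j : X) : Option X :=
  if h : ∃ a ∈ A, j ∈ clientBall 𝓓 a then some h.choose.1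
  else if h : ∃ p ∈ P, j ∈ clientBall 𝓓 p then some (g h.choose).1
  else if h : ∃ p ∈ F, j ∈ clientBall 𝓓 p then some h.choose.1
  else none

variable {𝓓 A P F g} {i j : X}

theorem assignment_eq_of_mem_clientBall (hA : (A : Set (X × ℝ)).PairwiseDisjoint (clientBall 𝓓))
    {a : X × ℝ} (ha : a ∈ A) (hj : j ∈ clientBall 𝓓 a) : assignment 𝓓 A P F g j = some a.1 := by
  have h : ∃ a ∈ A, j ∈ clientBall 𝓓 a := ⟨a, ha, hj⟩
  rw [assignment, dif_pos h, hA.elim_finset h.choose_spec.1 ha j h.choose_spec.2 hj]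

theorem assignment_eq_some (hj : assignment 𝓓 A P F g j = some i) :
    (∃ a ∈ A, j ∈ clientBall 𝓓 a ∧ a.1 = i) ∨
      (∃ p ∈ P, j ∈ clientBall 𝓓 p ∧ (∀ a ∈ A, j ∉ clientBall 𝓓 a) ∧ (g p).1 = i) ∨
      ∃ p ∈ F, j ∈ clientBall 𝓓 p ∧ p.1 = i := by
  unfold assignment at hj
  split_ifs at hj with hA hP hF
  · exact .inl ⟨_, hA.choose_spec.1, hA.choose_spec.2, Option.some_inj.1 hj⟩
  · push Not at hA
    exact .inr (.inl ⟨_, hP.choose_spec.1, hP.choose_spec.2, hA, Option.some_inj.1 hj⟩)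
  · exact .inr (.inr ⟨_, hF.choose_spec.1, hF.choose_spec.2, Option.some_inj.1 hj⟩)

theorem assignment_eq_none (hj : assignment 𝓓 A P F g j = none) :
    (∀ p ∈ P, j ∉ clientBall 𝓓 p) ∧ ∀ p ∈ F, j ∉ clientBall 𝓓 p := by
  unfold assignment at hj
  split_ifs at hj with hA hP hF
  push Not at hP hF
  exact ⟨hP, hF⟩

theorem card_clientBall_le_card_assignment
    (hA : (A : Set (X × ℝ)).PairwiseDisjoint (clientBall 𝓓)) {a : X × ℝ} (ha : a ∈ A) :
    (clientBall 𝓓 a).card ≤ (𝓓.filter fun j => assignment 𝓓 A P F g j = some a.1).card :=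
  card_le_card fun _ hj =>
    mem_filter.2 ⟨(mem_clientBall.1 hj).1, assignment_eq_of_mem_clientBall hA ha hj⟩

theorem assignment_mem_image_fst (hg : ∀ p ∈ P, clientBall 𝓓 p ≠ ⊥ → g p ∈ A)
    (hF : F.image Prod.fst ⊆ A.image Prod.fst) (hj : assignment 𝓓 A P F g j = some i) :
    i ∈ A.image Prod.fst := by
  rcases assignment_eq_some hj with ⟨a, ha, -, rfl⟩ | ⟨p, hp, hjp, -, rfl⟩ | ⟨p, hp, -, rfl⟩
  · exact mem_image_of_mem _ ha
  · exact mem_image_of_mem _ (hg p hp (ne_empty_of_mem hjp))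
  · exact hF (mem_image_of_mem _ hp)

theorem filter_assignment_eq_none_subset :
    𝓓.filter (fun j => assignment 𝓓 A P F g j = none) ⊆
      (𝓓.filter fun j => ∀ p ∈ P, ¬ dist p.1 j ≤ p.2).filter
        fun j => ∀ p ∈ F, ¬ dist p.1 j ≤ p.2 := by
  intro j hj
  obtain ⟨hj𝓓, hnone⟩ := mem_filter.1 hj
  obtain ⟨hP, hF⟩ := assignment_eq_none hnone
  exact mem_filter.2 ⟨mem_filter.2 ⟨hj𝓓, fun p hp h => hP p hp (mem_clientBall.2 ⟨hj𝓓, h⟩)⟩,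
    fun p hp h => hF p hp (mem_clientBall.2 ⟨hj𝓓, h⟩)⟩

end Assignment

section Budget

variable {X : Type*} (F P : Finset (X × ℝ)) (g : X × ℝ → X × ℝ)

noncomputable def budget (i : X) : ℝ :=
  ∑ p ∈ F with p.1 = i, p.2 + ∑ p ∈ P with (g p).1 = i, 2 * p.2

variable {F P g} {A : Finset (X × ℝ)} {r : X → ℝ}

theorem radius_add_sum_le_budget (hF : ∀ p ∈ F, 0 ≤ p.2) (hP : ∀ p ∈ P, 0 ≤ p.2)
    (hr : ∀ i ∈ F.image Prod.fst, ∃ ρ, (i, ρ) ∈ F ∧ r i ≤ ρ)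
    (hAUP : A ⊆ (F.image Prod.fst).image (fun i => (i, r i)) ∪ P) (hgA : ∀ a ∈ A, g a = a)
    {a : X × ℝ} (ha : a ∈ A) {E : Finset (X × ℝ)} (hE : E ⊆ P.filter fun p => (g p).1 = a.1)
    (haE : a ∉ E) :
    a.2 + ∑ p ∈ E, 2 * p.2 ≤ budget F P g a.1 := by
  have hPfib : ∀ p ∈ P.filter (fun p => (g p).1 = a.1), 0 ≤ 2 * p.2 := fun p hp =>
    mul_nonneg zero_le_two (hP p (mem_filter.1 hp).1)
  have hFfib : ∀ p ∈ F.filter (fun p => p.1 = a.1), 0 ≤ p.2 := fun p hp =>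
    hF p (mem_filter.1 hp).1
  rcases mem_union.1 (hAUP ha) with haU | haP
  · obtain ⟨i, hi, rfl⟩ := mem_image.1 haU
    obtain ⟨ρ, hρ, hrρ⟩ := hr i hi
    have hr_le : r i ≤ ∑ p ∈ F with p.1 = i, p.2 :=
      hrρ.trans (single_le_sum (f := Prod.snd) hFfib (mem_filter.2 ⟨hρ, rfl⟩))
    have hE_le := sum_le_sum_of_subset_of_nonneg hE fun p hp _ => hPfib p hp
    exact add_le_add hr_le hE_le
  · have haE' : insert a E ⊆ P.filter fun p => (g p).1 = a.1 :=
      insert_subset (mem_filter.2 ⟨haP, by rw [hgA a ha]⟩) hE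
    calc a.2 + ∑ p ∈ E, 2 * p.2 ≤ 2 * a.2 + ∑ p ∈ E, 2 * p.2 := by linarith [hP a haP]
      _ = ∑ p ∈ insert a E, 2 * p.2 := by rw [sum_insert haE]
      _ ≤ ∑ p ∈ P with (g p).1 = a.1, 2 * p.2 :=
        sum_le_sum_of_subset_of_nonneg haE' fun p hp _ => hPfib p hp
      _ ≤ budget F P g a.1 := le_add_of_nonneg_left (sum_nonneg hFfib)

theorem sSup_dist_assignment_le_budget [MetricSpace X] {𝓓 : Finset X}
    (hF : ∀ p ∈ F, 0 ≤ p.2) (hP : ∀ p ∈ P, 0 ≤ p.2)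
    (hr : ∀ i ∈ F.image Prod.fst, ∃ ρ, (i, ρ) ∈ F ∧ r i ≤ ρ)
    (hAUP : A ⊆ (F.image Prod.fst).image (fun i => (i, r i)) ∪ P) (hgA : ∀ a ∈ A, g a = a)
    (hg : ∀ p ∈ P, clientBall 𝓓 p ≠ ⊥ →
      g p ∈ A ∧ ¬Disjoint (clientBall 𝓓 (g p)) (clientBall 𝓓 p)) (i : X) :
    sSup (((𝓓.filter fun j => assignment 𝓓 A P F g j = some i).image fun j => dist i j :
      Finset ℝ) : Set ℝ) ≤ budget F P g i := by
  have hFfib : 0 ≤ ∑ p ∈ F with p.1 = i, p.2 := sum_nonneg fun p hp => hF p (mem_filter.1 hp).1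
  have hPfib : 0 ≤ ∑ p ∈ P with (g p).1 = i, 2 * p.2 :=
    sum_nonneg fun p hp => mul_nonneg zero_le_two (hP p (mem_filter.1 hp).1)
  refine Real.sSup_le (fun x hx => ?_) (add_nonneg hFfib hPfib)
  obtain ⟨j, hj, rfl⟩ := mem_image.1 (mem_coe.1 hx)
  rcases assignment_eq_some (mem_filter.1 hj).2 with
    ⟨a, ha, hja, rfl⟩ | ⟨p, hp, hjp, hjA, rfl⟩ | ⟨p, hp, hjp, rfl⟩
  · calc dist a.1 j ≤ a.2 + ∑ p ∈ (∅ : Finset (X × ℝ)), 2 * p.2 := by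
          simpa using (mem_clientBall.1 hja).2
      _ ≤ budget F P g a.1 :=
        radius_add_sum_le_budget hF hP hr hAUP hgA ha (empty_subset _) (notMem_empty a)
  · obtain ⟨hgp, hmeet⟩ := hg p hp (ne_empty_of_mem hjp)
    obtain ⟨j', hj'g, hj'p⟩ := not_disjoint_iff.1 hmeet
    have hgp_ne : g p ≠ p := fun h => hjA _ hgp (by rwa [h])
    calc dist (g p).1 j ≤ (g p).2 + 2 * p.2 := by
          have := dist_triangle4 (g p).1 j' p.1 j
          rw [dist_comm j' p.1] at this
          linarith [(mem_clientBall.1 hj'g).2, (mem_clientBall.1 hj'p).2,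
            (mem_clientBall.1 hjp).2]
      _ = (g p).2 + ∑ q ∈ {p}, 2 * q.2 := by rw [sum_singleton]
      _ ≤ budget F P g (g p).1 :=
        radius_add_sum_le_budget hF hP hr hAUP hgA hgp
          (singleton_subset_iff.2 (mem_filter.2 ⟨hp, rfl⟩)) (notMem_singleton.2 hgp_ne)
  · calc dist p.1 j ≤ p.2 := (mem_clientBall.1 hjp).2
      _ ≤ ∑ q ∈ F with q.1 = p.1, q.2 :=
        single_le_sum (f := Prod.snd) (fun q hq => hF q (mem_filter.1 hq).1)
          (mem_filter.2 ⟨hp, rfl⟩)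
      _ ≤ budget F P g p.1 := le_add_of_nonneg_right hPfib

theorem sum_budget_le (hF : ∀ p ∈ F, 0 ≤ p.2) (hP : ∀ p ∈ P, 0 ≤ p.2) (S : Finset X) :
    ∑ i ∈ S, budget F P g i ≤ ∑ p ∈ F, p.2 + ∑ p ∈ P, 2 * p.2 := by
  simp only [budget, sum_add_distrib]
  exact add_le_add
    (sum_fiberwise_le_sum_of_sum_fiber_nonneg fun _ _ =>
      sum_nonneg fun p hp => hF p (mem_filter.1 hp).1)
    (sum_fiberwise_le_sum_of_sum_fiber_nonneg fun _ _ =>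
      sum_nonneg fun p hp => mul_nonneg zero_le_two (hP p (mem_filter.1 hp).1))

end Budget

theorem stmt_0
    {X : Type*} [MetricSpace X]
    (𝓕 𝓓 : Finset X) (L : X → ℕ) (k m : ℕ)
    (FO F : Finset (X × ℝ))
    -- F^O ⊆ 𝓛 and |F^O| ≤ k
    (hFO𝓛 : ∀ p ∈ FO, p.1 ∈ 𝓕 ∧ 0 ≤ p.2 ∧
      L p.1 ≤ (𝓓.filter fun j => dist p.1 j ≤ p.2).card)
    (hFOcard : FO.card ≤ k)
    -- F ⊆ 𝓛 and |F| ≤ k' = k − |F^O|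
    (hF𝓛 : ∀ p ∈ F, p.1 ∈ 𝓕 ∧ 0 ≤ p.2 ∧
      L p.1 ≤ (𝓓.filter fun j => dist p.1 j ≤ p.2).card)
    (hFcard : F.card ≤ k - FO.card)
    -- at most m clients of 𝓓' = 𝓓 \ ∪_{(i,r)∈F^O} B(i,r) are uncovered by F
    (houtliers :
      (((𝓓.filter fun j => ∀ p ∈ FO, ¬ dist p.1 j ≤ p.2)).filter
        fun j => ∀ p ∈ F, ¬ dist p.1 j ≤ p.2).card ≤ m)
    -- the witness radii r'_i ≤ max{r : (i,r) ∈ F}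
    (r' : X → ℝ)
    (hr'le : ∀ i ∈ F.image Prod.fst, ∃ ρ, (i, ρ) ∈ F ∧ r' i ≤ ρ)
    -- U = {(i, r'_i) : i ∈ μ(F)} ⊆ 𝓛
    (hU𝓛 : ∀ i ∈ F.image Prod.fst, i ∈ 𝓕 ∧ 0 ≤ r' i ∧
      L i ≤ (𝓓.filter fun j => dist i j ≤ r' i).card)
    -- the pairs of U are pairwise non-intersecting
    (hUnonint : ∀ i ∈ F.image Prod.fst, ∀ i' ∈ F.image Prod.fst, i ≠ i' →
      r' i + r' i' < dist i i') :
    ∃ (S : Finset X) (σ : X → Option X),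
      S ⊆ 𝓕 ∧ S.card ≤ k ∧
      (∀ j ∈ 𝓓, ∀ i, σ j = some i → i ∈ S) ∧
      (∀ i ∈ S, L i ≤ (𝓓.filter fun j => σ j = some i).card) ∧
      (𝓓.filter fun j => σ j = none).card ≤ m ∧
      (∑ i ∈ S, sSup (((𝓓.filter fun j => σ j = some i).image fun j => dist i j : Finset ℝ) : Set ℝ))
        ≤ (∑ p ∈ F, p.2) + ∑ p ∈ FO, 2 * p.2 := by
  set U := (F.image Prod.fst).image fun i => (i, r' i)
  obtain ⟨A, hUA, hAUP, hA, hmeet⟩ := exists_maximal_pairwiseDisjoint_extension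
    (pairwiseDisjoint_clientBall_image (𝓓 := 𝓓) hUnonint) FO
  obtain ⟨g, hgA, hg⟩ := exists_retraction_of_forall_not_disjoint hmeet
  have hA𝓛 : ∀ a ∈ A, a.1 ∈ 𝓕 ∧ L a.1 ≤ (clientBall 𝓓 a).card := by
    intro a ha
    rcases mem_union.1 (hAUP ha) with haU | haFO
    · obtain ⟨i, hi, rfl⟩ := mem_image.1 haU
      exact ⟨(hU𝓛 i hi).1, (hU𝓛 i hi).2.2⟩
    · exact ⟨(hFO𝓛 a haFO).1, (hFO𝓛 a haFO).2.2⟩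
  have hFnn : ∀ p ∈ F, 0 ≤ p.2 := fun p hp => (hF𝓛 p hp).2.1
  have hFOnn : ∀ p ∈ FO, 0 ≤ p.2 := fun p hp => (hFO𝓛 p hp).2.1
  refine ⟨A.image Prod.fst, assignment 𝓓 A FO F g, ?_, ?_, ?_, ?_, ?_, ?_⟩
  · exact image_subset_iff.2 fun a ha => (hA𝓛 a ha).1
  · have hU : U.card ≤ F.card := card_image_le.trans card_image_le
    have hUFO := card_union_le U FO
    have hAcard : (A.image Prod.fst).card ≤ (U ∪ FO).card :=
      card_image_le.trans (card_le_card hAUP)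
    omega
  · intro j _ i hj
    refine assignment_mem_image_fst (fun p hp h => (hg p hp h).1) (fun i hi => ?_) hj
    exact mem_image.2 ⟨(i, r' i), hUA (mem_image_of_mem _ hi), rfl⟩
  · exact forall_mem_image.2 fun a ha =>
      (hA𝓛 a ha).2.trans (card_clientBall_le_card_assignment hA ha)
  · exact (card_le_card filter_assignment_eq_none_subset).trans houtliers
  · exact (sum_le_sum fun i _ =>
      sSup_dist_assignment_le_budget hFnn hFOnn hr'le hAUP hgA hg i).trans
        (sum_budget_le hFnn hFOnn _)
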